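/- arXiv:1409.8391 — 3 statements merged into one kernel-verified Lean document; each statement's English description precedes it below -/
import Mathlib

section
/- Let n ≥ 0 and r be integers with r ≡ n (mod 2). For all real numbers a > 0, d > 0, x ∈ ℝ, and every real 2×2 matrix g with det g > 0, one has φ^n_r(b·g) = a^{n+1} d^{−1} φ^n_r(g), where b = ((a, x), (0, d)). That is, φ^n_r lies in the space of functions on GL₂(ℝ)⁺ transforming under the identity component of the upper-triangular Borel subgroup by the character λ(n+2, n). -/
open Matrix

noncomputable section

/-- z(g) = (ai + b)/(ci + d) for g = ((a,b),(c,d)). -/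
def zg (g : Matrix (Fin 2) (Fin 2) ℝ) : ℂ :=
  ((g 0 0 : ℂ) * Complex.I + (g 0 1 : ℂ)) / ((g 1 0 : ℂ) * Complex.I + (g 1 1 : ℂ))

/-- w(g) = ci + d for g = ((a,b),(c,d)). -/
def wg (g : Matrix (Fin 2) (Fin 2) ℝ) : ℂ :=
  (g 1 0 : ℂ) * Complex.I + (g 1 1 : ℂ)

/-- φ^n_r(g) = (z(g) − conj z(g))^{n+1} · w(g)^{(n−r)/2} · (conj w(g))^{(n+r)/2}. -/
def phi (n : ℕ) (r : ℤ) (g : Matrix (Fin 2) (Fin 2) ℝ) : ℂ :=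
  (zg g - (starRingEnd ℂ) (zg g)) ^ (n + 1) *
    wg g ^ (((n : ℤ) - r) / 2) * ((starRingEnd ℂ) (wg g)) ^ (((n : ℤ) + r) / 2)

/-! The imaginary part of `z(g)` is `det g / |w(g)|²`. Left multiplication by `b = !![a, x; 0, d]`
multiplies `det` by `a d` and `w` by `d`, so `z − z̄` gets multiplied by `a / d`. The parity of
`n − r` makes the two exponents of `w` add up to `n`, leaving `(a / d)^(n+1) d^n = a^(n+1) d⁻¹`. -/

open Complex ComplexConjugate

/-- Also true when `w(g) = 0`: then both sides are `0`. -/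
theorem zg_sub_conj (g : Matrix (Fin 2) (Fin 2) ℝ) :
    zg g - conj (zg g) = 2 * I * (g.det / normSq (wg g) : ℝ) := by
  rw [sub_conj, zg, div_im, det_fin_two, ← wg]
  simp only [add_im, mul_im, ofReal_re, I_im, mul_one, ofReal_im, I_re, mul_zero, add_zero, wg,
    add_re, mul_re, sub_self, zero_add, ofReal_mul, ofReal_ofNat, ofReal_sub, ofReal_div]
  ring

theorem wg_upperTriangular_mul (a x d : ℝ) (g : Matrix (Fin 2) (Fin 2) ℝ) :
    wg (!![a, x; 0, d] * g) = d * wg g := by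
  simp only [wg, mul_apply, of_apply, cons_val', cons_val_fin_one, cons_val_one, Fin.sum_univ_two,
    cons_val_zero, zero_mul, zero_add, ofReal_mul]
  ring

theorem zg_sub_conj_upperTriangular_mul {d : ℝ} (hd : d ≠ 0) (a x : ℝ)
    (g : Matrix (Fin 2) (Fin 2) ℝ) :
    zg (!![a, x; 0, d] * g) - conj (zg (!![a, x; 0, d] * g)) =
      (a / d : ℂ) * (zg g - conj (zg g)) := by
  rw [zg_sub_conj, zg_sub_conj, wg_upperTriangular_mul, det_mul, det_fin_two_of, normSq_mul,
    normSq_ofReal]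
  push_cast
  rw [mul_zero, sub_zero, mul_right_comm _ (d : ℂ), mul_right_comm (d : ℂ) d,
    mul_div_mul_right _ _ (ofReal_ne_zero.mpr hd), mul_div_mul_comm]
  ring

theorem phi_upperTriangular_mul (n : ℕ) (r : ℤ) {d : ℝ} (hd : d ≠ 0) (a x : ℝ)
    (g : Matrix (Fin 2) (Fin 2) ℝ) :
    phi n r (!![a, x; 0, d] * g) =
      (a / d : ℂ) ^ (n + 1) * (d : ℂ) ^ ((((n : ℤ) - r) / 2) + ((n : ℤ) + r) / 2) * phi n r g := by
  rw [phi, phi, zg_sub_conj_upperTriangular_mul hd, wg_upperTriangular_mul, map_mul, conj_ofReal,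
    mul_pow, mul_zpow, mul_zpow, zpow_add₀ (ofReal_ne_zero.mpr hd)]
  ring

theorem stmt8_general (n : ℕ) (r : ℤ) (hr : (2 : ℤ) ∣ ((n : ℤ) - r))
    (a d x : ℝ) (hd : 0 < d)
    (g : Matrix (Fin 2) (Fin 2) ℝ) :
    phi n r (!![a, x; 0, d] * g) = (a : ℂ) ^ (n + 1) * (d : ℂ)⁻¹ * phi n r g := by
  have hexp : ((n : ℤ) - r) / 2 + ((n : ℤ) + r) / 2 = n := by omega
  have hdC : (d : ℂ) ≠ 0 := ofReal_ne_zero.mpr hd.ne'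
  rw [phi_upperTriangular_mul n r hd.ne', hexp, zpow_natCast, div_pow, pow_succ (d : ℂ)]
  field_simp

/-- φ^n_r transforms under the identity component of the Borel by λ(n+2, n):
φ^n_r(((a,x),(0,d))·g) = a^{n+1} d^{−1} φ^n_r(g) for a, d > 0. -/
theorem stmt8 (n : ℕ) (r : ℤ) (hr : (2 : ℤ) ∣ ((n : ℤ) - r))
    (a d x : ℝ) (ha : 0 < a) (hd : 0 < d)
    (g : Matrix (Fin 2) (Fin 2) ℝ) (hg : 0 < g.det) :
    phi n r (!![a, x; 0, d] * g) = (a : ℂ) ^ (n + 1) * (d : ℂ)⁻¹ * phi n r g :=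
  stmt8_general n r hr a d x hd g
end
end

section
/- Let p be a prime, let η : (ℚ_p, +) → ℂ^× be a group homomorphism, and let W : GL₄(ℚ_p) → ℂ be a function. For r, s, t ∈ ℚ_p let u(r,s,t) = I₄ + r·E₁₃ + t·E₁₄ + t·E₂₃ + s·E₂₄. Assume: (i) W(u(r,s,t)·g) = η(t)·W(g) for all r, s, t ∈ ℚ_p and all g ∈ GL₄(ℚ_p); (ii) W(g·(I₄ + E₁₄ + E₂₃)) = W(g) for all g ∈ GL₄(ℚ_p). Then for every x ∈ ℚ_p^× with η(x) ≠ 1 one has W(diag(x, x, 1, 1)) = 0. In particular, if η is trivial on ℤ_p and η(p^{−m}) ≠ 1 for all integers m ≥ 1, then W(diag(p^{−m}, p^{−m}, 1, 1)) = 0 for all m ≥ 1. -/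
/-!
The element `d = diag(x, x, 1, 1)` normalises `U` and conjugates `u(0,0,1)` to `u(0,0,x)`.
Hence right-invariance under `u(0,0,1)` and left-equivariance under `U` give
`W d = W (d u(0,0,1)) = W (u(0,0,x) d) = η(x) W d`, which forces `W d = 0` once `η(x) ≠ 1`.
-/

open Matrix

noncomputable section

/-- u(r,s,t) = I₄ + r·E₁₃ + t·E₁₄ + t·E₂₃ + s·E₂₄, an element of the unipotent
radical of the Siegel parabolic. -/
def u {p : ℕ} [Fact p.Prime] (r s t : ℚ_[p]) : Matrix (Fin 4) (Fin 4) ℚ_[p] :=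
  !![1, 0, r, t; 0, 1, t, s; 0, 0, 1, 0; 0, 0, 0, 1]

section

variable {p : ℕ} [Fact p.Prime]

theorem diagonal_mul_u (x r s t : ℚ_[p]) :
    diagonal ![x, x, 1, 1] * u r s t = u (x * r) (x * s) (x * t) * diagonal ![x, x, 1, 1] := by
  ext i j
  fin_cases i <;> fin_cases j <;> simp [u]

theorem isUnit_det_diagonal_of_ne_zero {x : ℚ_[p]} (hx : x ≠ 0) :
    IsUnit (diagonal ![x, x, 1, 1]).det := by
  simpa [det_diagonal, Fin.prod_univ_four] using hx

theorem eq_zero_at_diagonal_of_ne_one (η : ℚ_[p] → ℂˣ) (W : Matrix (Fin 4) (Fin 4) ℚ_[p] → ℂ)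
    (h1 : ∀ (r s t : ℚ_[p]) (g : Matrix (Fin 4) (Fin 4) ℚ_[p]), IsUnit g.det →
      W (u r s t * g) = (η t : ℂ) * W g)
    (h2 : ∀ g : Matrix (Fin 4) (Fin 4) ℚ_[p], IsUnit g.det → W (g * u 0 0 1) = W g)
    {x : ℚ_[p]} (hx : x ≠ 0) (hηx : η x ≠ 1) :
    W (diagonal ![x, x, 1, 1]) = 0 := by
  set d := diagonal ![x, x, 1, 1]
  have hd : IsUnit d.det := isUnit_det_diagonal_of_ne_zero hx
  have key : (η x : ℂ) * W d = W d := by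
    have hconj : d * u 0 0 1 = u 0 0 x * d := by simpa using diagonal_mul_u x 0 0 1
    rw [← h1 0 0 x d hd, ← hconj, h2 d hd]
  by_contra hW
  exact hηx (Units.val_eq_one.mp ((mul_eq_right₀ hW).mp key))

end

theorem stmt10_general (p : ℕ) [Fact p.Prime] (η : ℚ_[p] → ℂˣ)
    (W : Matrix (Fin 4) (Fin 4) ℚ_[p] → ℂ)
    (h1 : ∀ (r s t : ℚ_[p]) (g : Matrix (Fin 4) (Fin 4) ℚ_[p]), IsUnit g.det →
      W (u r s t * g) = (η t : ℂ) * W g)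
    (h2 : ∀ g : Matrix (Fin 4) (Fin 4) ℚ_[p], IsUnit g.det →
      W (g * u 0 0 1) = W g) :
    (∀ x : ℚ_[p], x ≠ 0 → η x ≠ 1 →
      W (Matrix.diagonal ![x, x, 1, 1]) = 0) ∧
    ((∀ a : ℚ_[p], ‖a‖ ≤ 1 → η a = 1) →
      (∀ m : ℕ, 1 ≤ m → η ((p : ℚ_[p]) ^ (-(m : ℤ))) ≠ 1) →
      ∀ m : ℕ, 1 ≤ m →
        W (Matrix.diagonal
          ![(p : ℚ_[p]) ^ (-(m : ℤ)), (p : ℚ_[p]) ^ (-(m : ℤ)), 1, 1]) = 0) := by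
  have hvanish : ∀ x : ℚ_[p], x ≠ 0 → η x ≠ 1 → W (diagonal ![x, x, 1, 1]) = 0 :=
    fun _ hx hηx => eq_zero_at_diagonal_of_ne_one η W h1 h2 hx hηx
  refine ⟨hvanish, fun _ hηp m hm => hvanish _ ?_ (hηp m hm)⟩
  exact zpow_ne_zero _ (Nat.cast_ne_zero.mpr (Fact.out : p.Prime).ne_zero)

theorem stmt10 (p : ℕ) [Fact p.Prime] (η : ℚ_[p] → ℂˣ)
    (hη : ∀ a b : ℚ_[p], η (a + b) = η a * η b)
    (W : Matrix (Fin 4) (Fin 4) ℚ_[p] → ℂ)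
    (h1 : ∀ (r s t : ℚ_[p]) (g : Matrix (Fin 4) (Fin 4) ℚ_[p]), IsUnit g.det →
      W (u r s t * g) = (η t : ℂ) * W g)
    (h2 : ∀ g : Matrix (Fin 4) (Fin 4) ℚ_[p], IsUnit g.det →
      W (g * u 0 0 1) = W g) :
    (∀ x : ℚ_[p], x ≠ 0 → η x ≠ 1 →
      W (Matrix.diagonal ![x, x, 1, 1]) = 0) ∧
    ((∀ a : ℚ_[p], ‖a‖ ≤ 1 → η a = 1) →
      (∀ m : ℕ, 1 ≤ m → η ((p : ℚ_[p]) ^ (-(m : ℤ))) ≠ 1) →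
      ∀ m : ℕ, 1 ≤ m →
        W (Matrix.diagonal
          ![(p : ℚ_[p]) ^ (-(m : ℤ)), (p : ℚ_[p]) ^ (-(m : ℤ)), 1, 1]) = 0) :=
  stmt10_general p η W h1 h2
end
end

section
/- Let V be a complex vector space and ρ a group homomorphism from GL₄(ℂ) to the group of linear automorphisms of V. Let u, u', m be integers and w ∈ V a vector such that ρ(diag(α₁, α₂, α₁⁻¹ν, α₂⁻¹ν))·w = α₁^u · α₂^{u'} · ν^m · w for all α₁, α₂, ν ∈ ℂ^×. Let J = (1/√2)·(I₄ + i(E₁₃ + E₂₄ + E₃₁ + E₄₂)), let N be the matrix with rows (0,−1,0,0), (−1,0,0,0), (0,0,0,1), (0,0,1,0), and for real x, y, x', y' let R(x,y,x',y') be the matrix with rows (x,0,y,0), (0,x',0,y'), (−y,0,x,0), (0,−y',0,x'). Set v = ρ(J)w and v̄ = ρ(N)v. Then for all real x, y, x', y' with x² + y² = x'² + y'² = 1: ρ(R(x,y,x',y'))·v = (x+iy)^u (x'+iy')^{u'} · v and ρ(R(x,y,x',y'))·v̄ = (x+iy)^{−u'} (x'+iy')^{−u} · v̄; moreover for every λ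 > 0, ρ(λ·I₄)·v = λ^{u+u'+2m}·v and ρ(λ·I₄)·v̄ = λ^{u+u'+2m}·v̄. That is, if w has weight λ(u,u',c) for the diagonal torus (with c = u+u'+2m), then v has weight λ'(u,u',c) and v̄ has weight λ'(−u',−u,c) for the compact torus A_G T'. -/
open Matrix

noncomputable section

/-- The Cayley element J = (1/√2)(I₄ + i(E₁₃ + E₂₄ + E₃₁ + E₄₂)). -/
def Jmat : Matrix (Fin 4) (Fin 4) ℂ :=
  ((Real.sqrt 2 : ℂ))⁻¹ •
    (1 + Complex.I • (Matrix.single 0 2 1 + Matrix.single 1 3 1 +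
      Matrix.single 2 0 1 + Matrix.single 3 1 1))

/-- The element N implementing complex conjugation. -/
def Nmat : Matrix (Fin 4) (Fin 4) ℂ :=
  !![0, -1, 0, 0; -1, 0, 0, 0; 0, 0, 0, 1; 0, 0, 1, 0]

/-- R(x,y,x',y'): element of the compact torus T'. -/
def Rmat (x y x' y' : ℂ) : Matrix (Fin 4) (Fin 4) ℂ :=
  !![x, 0, y, 0; 0, x', 0, y'; -y, 0, x, 0; 0, -y', 0, x']

/-! The proof is a change of torus. `J` diagonalises the compact torus:
`R(x,y,x',y') J = J diag(z, z', z⁻¹, z'⁻¹)` with `z = x + iy`, `z' = x' + iy'`, and that diagonal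
matrix lies in the diagonal torus with `ν = 1`, so `ρ(J) w` has the weight `z^u z'^{u'}`.
`N` conjugates `R(x,y,x',y')` to `R(x',-y',x,-y)`, which swaps `z, z'` and inverts them.
Positive scalars are central and lie in the diagonal torus with `α₁ = α₂ = λ`, `ν = λ²`. -/

theorem Units.exists_val_eq_and_mul_eq_mul {M : Type*} [Monoid M] {g k : Mˣ} {a : M}
    (hgk : (g : M) * k = k * a) : ∃ h : Mˣ, (h : M) = a ∧ g * k = k * h :=
  ⟨k⁻¹ * g * k, by rw [Units.val_mul, Units.val_mul, mul_assoc, hgk, Units.inv_mul_cancel_left],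
    by rw [mul_assoc, _root_.mul_inv_cancel_left]⟩

theorem Matrix.GeneralLinearGroup.commute_of_val_eq_smul_one {n R : Type*} [Fintype n]
    [DecidableEq n] [CommRing R]
    {g : GL n R} {c : R} (hg : (g : Matrix n n R) = c • 1) (k : GL n R) : Commute g k :=
  Units.ext <| by simp only [Units.val_mul, hg, Matrix.smul_mul, Matrix.mul_smul, one_mul, mul_one]

theorem MonoidHom.apply_apply_eq_smul_of_mul_eq_mul {G R V : Type*} [Monoid G] [Semiring R]
    [AddCommMonoid V] [Module R V] (ρ : G →* (V →ₗ[R] V)ˣ) {g k h : G} (hgk : g * k = k * h)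
    {z : V} {c : R} (hz : (ρ h : V →ₗ[R] V) z = c • z) :
    (ρ g : V →ₗ[R] V) ((ρ k : V →ₗ[R] V) z) = c • (ρ k : V →ₗ[R] V) z := by
  rw [← Module.End.mul_apply, ← Units.val_mul, ← map_mul, hgk, map_mul, Units.val_mul,
    Module.End.mul_apply, hz, map_smul]

theorem Complex.inv_add_I_mul_of_sq_add_sq_eq_one {x y : ℂ} (h : x ^ 2 + y ^ 2 = 1) :
    (x + I * y)⁻¹ = x - I * y :=
  inv_eq_of_mul_eq_one_right <| by linear_combination h - y ^ 2 * I_sq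

theorem Rmat_mul_Jmat (x y x' y' : ℂ) :
    Rmat x y x' y' * Jmat =
      Jmat * diagonal ![x + Complex.I * y, x' + Complex.I * y', x - Complex.I * y,
        x' - Complex.I * y'] := by
  ext i j
  fin_cases i <;> fin_cases j <;>
    simp [Rmat, Jmat, mul_apply, Fin.sum_univ_four, single, one_apply, diagonal] <;>
    ring_nf <;> simp [Complex.I_sq]

theorem Rmat_mul_Nmat (x y x' y' : ℂ) : Rmat x y x' y' * Nmat = Nmat * Rmat x' (-y') x (-y) := by
  ext i j
  fin_cases i <;> fin_cases j <;> simp [Rmat, Nmat, mul_apply, Fin.sum_univ_four]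

/-- `w` has weight `λ(u, u', u + u' + 2m)` for the diagonal torus of `GSp₄`. -/
def HasDiagonalWeight {V : Type*} [AddCommGroup V] [Module ℂ V]
    (ρ : GL (Fin 4) ℂ →* (V →ₗ[ℂ] V)ˣ) (u u' m : ℤ) (w : V) : Prop :=
  ∀ (α₁ α₂ ν : ℂ) (g : GL (Fin 4) ℂ),
    (g : Matrix (Fin 4) (Fin 4) ℂ) = diagonal ![α₁, α₂, α₁⁻¹ * ν, α₂⁻¹ * ν] →
    (ρ g : V →ₗ[ℂ] V) w = (α₁ ^ u * α₂ ^ u' * ν ^ m) • w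

namespace HasDiagonalWeight

variable {V : Type*} [AddCommGroup V] [Module ℂ V] {ρ : GL (Fin 4) ℂ →* (V →ₗ[ℂ] V)ˣ}
  {u u' m : ℤ} {w : V}

theorem apply_smul_one (hw : HasDiagonalWeight ρ u u' m w) {c : ℂ} (hc : c ≠ 0)
    {g : GL (Fin 4) ℂ} (hg : (g : Matrix (Fin 4) (Fin 4) ℂ) = c • 1) :
    (ρ g : V →ₗ[ℂ] V) w = (c ^ (u + u' + 2 * m)) • w := by
  have hdiag : (g : Matrix (Fin 4) (Fin 4) ℂ) = diagonal ![c, c, c⁻¹ * c ^ 2, c⁻¹ * c ^ 2] := by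
    rw [hg, inv_mul_eq_div, pow_two, mul_div_cancel_right₀ _ hc, smul_one_eq_diagonal]
    congr 1
    ext i
    fin_cases i <;> simp
  rw [hw c c (c ^ 2) g hdiag, zpow_add₀ hc, zpow_add₀ hc, _root_.zpow_mul, zpow_ofNat]

theorem apply_Rmat_Jmat (hw : HasDiagonalWeight ρ u u' m w) {gJ : GL (Fin 4) ℂ}
    (hgJ : (gJ : Matrix (Fin 4) (Fin 4) ℂ) = Jmat) {x y x' y' : ℂ} (hxy : x ^ 2 + y ^ 2 = 1)
    (hxy' : x' ^ 2 + y' ^ 2 = 1) {g : GL (Fin 4) ℂ}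
    (hg : (g : Matrix (Fin 4) (Fin 4) ℂ) = Rmat x y x' y') :
    (ρ g : V →ₗ[ℂ] V) ((ρ gJ : V →ₗ[ℂ] V) w) =
      ((x + Complex.I * y) ^ u * (x' + Complex.I * y') ^ u') • (ρ gJ : V →ₗ[ℂ] V) w := by
  obtain ⟨d, hd, hgd⟩ := Units.exists_val_eq_and_mul_eq_mul (hg ▸ hgJ ▸ Rmat_mul_Jmat x y x' y')
  have hd' : (d : Matrix (Fin 4) (Fin 4) ℂ) = diagonal ![x + Complex.I * y, x' + Complex.I * y',
      (x + Complex.I * y)⁻¹ * 1, (x' + Complex.I * y')⁻¹ * 1] := by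
    rw [hd, Complex.inv_add_I_mul_of_sq_add_sq_eq_one hxy,
      Complex.inv_add_I_mul_of_sq_add_sq_eq_one hxy', mul_one, mul_one]
  refine ρ.apply_apply_eq_smul_of_mul_eq_mul hgd ?_
  rw [hw _ _ 1 d hd', _root_.one_zpow, mul_one]

theorem apply_Rmat_Nmat_Jmat (hw : HasDiagonalWeight ρ u u' m w) {gJ gN : GL (Fin 4) ℂ}
    (hgJ : (gJ : Matrix (Fin 4) (Fin 4) ℂ) = Jmat) (hgN : (gN : Matrix (Fin 4) (Fin 4) ℂ) = Nmat)
    {x y x' y' : ℂ} (hxy : x ^ 2 + y ^ 2 = 1) (hxy' : x' ^ 2 + y' ^ 2 = 1) {g : GL (Fin 4) ℂ}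
    (hg : (g : Matrix (Fin 4) (Fin 4) ℂ) = Rmat x y x' y') :
    (ρ g : V →ₗ[ℂ] V) ((ρ gN : V →ₗ[ℂ] V) ((ρ gJ : V →ₗ[ℂ] V) w)) =
      ((x + Complex.I * y) ^ (-u') * (x' + Complex.I * y') ^ (-u)) •
        (ρ gN : V →ₗ[ℂ] V) ((ρ gJ : V →ₗ[ℂ] V) w) := by
  obtain ⟨r, hr, hgr⟩ := Units.exists_val_eq_and_mul_eq_mul (hg ▸ hgN ▸ Rmat_mul_Nmat x y x' y')
  refine ρ.apply_apply_eq_smul_of_mul_eq_mul hgr ?_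
  rw [hw.apply_Rmat_Jmat hgJ (by rwa [neg_sq]) (by rwa [neg_sq]) hr, ← _root_.inv_zpow',
    ← _root_.inv_zpow',
    Complex.inv_add_I_mul_of_sq_add_sq_eq_one hxy, Complex.inv_add_I_mul_of_sq_add_sq_eq_one hxy',
    mul_comm, mul_neg, mul_neg, ← sub_eq_add_neg, ← sub_eq_add_neg]

end HasDiagonalWeight

theorem stmt13 (V : Type*) [AddCommGroup V] [Module ℂ V]
    (ρ : GL (Fin 4) ℂ →* (V →ₗ[ℂ] V)ˣ)
    (u u' m : ℤ) (w : V)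
    (hw : ∀ (α₁ α₂ ν : ℂ) (g : GL (Fin 4) ℂ),
      (g : Matrix (Fin 4) (Fin 4) ℂ) = Matrix.diagonal ![α₁, α₂, α₁⁻¹ * ν, α₂⁻¹ * ν] →
      (ρ g : V →ₗ[ℂ] V) w = (α₁ ^ u * α₂ ^ u' * ν ^ m) • w)
    (gJ gN : GL (Fin 4) ℂ)
    (hgJ : (gJ : Matrix (Fin 4) (Fin 4) ℂ) = Jmat)
    (hgN : (gN : Matrix (Fin 4) (Fin 4) ℂ) = Nmat)
    (v vbar : V)
    (hv : v = (ρ gJ : V →ₗ[ℂ] V) w)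
    (hvbar : vbar = (ρ gN : V →ₗ[ℂ] V) v) :
    (∀ (x y x' y' : ℝ), x ^ 2 + y ^ 2 = 1 → x' ^ 2 + y' ^ 2 = 1 →
      ∀ g : GL (Fin 4) ℂ,
        (g : Matrix (Fin 4) (Fin 4) ℂ) = Rmat (x : ℂ) (y : ℂ) (x' : ℂ) (y' : ℂ) →
        (ρ g : V →ₗ[ℂ] V) v =
          (((x : ℂ) + Complex.I * y) ^ u * ((x' : ℂ) + Complex.I * y') ^ u') • v ∧
        (ρ g : V →ₗ[ℂ] V) vbar =
          (((x : ℂ) + Complex.I * y) ^ (-u') * ((x' : ℂ) + Complex.I * y') ^ (-u)) • vbar) ∧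
    (∀ lam : ℝ, 0 < lam →
      ∀ g : GL (Fin 4) ℂ,
        (g : Matrix (Fin 4) (Fin 4) ℂ) = (lam : ℂ) • (1 : Matrix (Fin 4) (Fin 4) ℂ) →
        (ρ g : V →ₗ[ℂ] V) v = ((lam : ℂ) ^ (u + u' + 2 * m)) • v ∧
        (ρ g : V →ₗ[ℂ] V) vbar = ((lam : ℂ) ^ (u + u' + 2 * m)) • vbar) := by
  have hw : HasDiagonalWeight ρ u u' m w := hw
  subst hv hvbar
  refine ⟨fun x y x' y' hxy hxy' g hg => ?_, fun lam hlam g hg => ?_⟩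
  · have hxy : (x : ℂ) ^ 2 + (y : ℂ) ^ 2 = 1 := by exact_mod_cast hxy
    have hxy' : (x' : ℂ) ^ 2 + (y' : ℂ) ^ 2 = 1 := by exact_mod_cast hxy'
    exact ⟨hw.apply_Rmat_Jmat hgJ hxy hxy' hg, hw.apply_Rmat_Nmat_Jmat hgJ hgN hxy hxy' hg⟩
  · have hgw := hw.apply_smul_one (by exact_mod_cast hlam.ne') hg
    have hcomm := GeneralLinearGroup.commute_of_val_eq_smul_one hg
    have hgv := ρ.apply_apply_eq_smul_of_mul_eq_mul (hcomm gJ).eq hgw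
    exact ⟨hgv, ρ.apply_apply_eq_smul_of_mul_eq_mul (hcomm gN).eq hgv⟩
end
end
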